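/- The game-theoretic semantics extends the compositional one on the first-order fragment: for every first-order formula φ over a vocabulary with partially interpreted relation symbols, function symbols and constant symbols, every such partial model 𝔐 and every variable assignment g, the verifier (Eloise) has a winning strategy in the semantic game G(𝔐, g, φ) if and only if 𝔐, g ⊨⁺ φ in the compositional semantics, and the falsifier (Abelard) has a winning strategy in G(𝔐, g, φ) if and only if 𝔐, g ⊨⁻ φ in the compositional semantics. -/

import Mathlib

/-!
Generalise over the assignment and over which player is currently the verifier: player `w`
has a winning strategy when player `v` is the verifier iff `φ` holds positively (`w = v`) or
negatively (`w ≠ v`), by induction on `φ`. Negation swaps the roles exactly as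
it swaps `⊨⁺` and `⊨⁻`, and the moves at `∧` and `∃` (a choice for one player, all options
for the other) mirror the conjunctive/disjunctive and existential/universal clauses of `Sat`.
-/

namespace PartialFO

/-- Terms over a vocabulary with (partial) function symbols and constant symbols;
variables, function symbols and constant symbols are indexed by `ℕ`. -/
inductive PTerm where
  | var (x : ℕ)
  | const (c : ℕ)
  | func (f : ℕ) (ts : List PTerm)

/-- First-order formulas: relational atoms, equality atoms, `¬`, `∧`, `∃`. -/
inductive PFormula where
  | rel (R : ℕ) (ts : List PTerm)
  | eq (t₁ t₂ : PTerm)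
  | not (φ : PFormula)
  | and (φ ψ : PFormula)
  | ex (x : ℕ) (φ : PFormula)

/-- A partial model with domain `A`: each relation symbol is interpreted as a
partially defined relation (`some true` = the tuple is in the relation, `some false`
= the tuple is not in the relation, `none` = undefined), each function symbol as a
partial function, and each constant symbol as an element or as undefined. -/
structure PModel (A : Type) where
  rel : ℕ → List A → Option Bool
  func : ℕ → List A → Option A
  const : ℕ → Option A

/-- Partial variable assignments into the domain `A`. -/
abbrev Assign (A : Type) := ℕ → Option A

/-- `g[x ↦ a]`. -/
def Assign.update {A : Type} (g : Assign A) (x : ℕ) (a : A) : Assign A :=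
  fun y => if y = x then some a else g y

variable {A : Type}

/-- `EvalTerm M g t a` : the value `t^{M,g}` is defined and equal to `a`.
A compound term has a value iff all its subterms have values and the partial
function is defined on the resulting tuple. -/
inductive EvalTerm (M : PModel A) (g : Assign A) : PTerm → A → Prop where
  | var {x a} : g x = some a → EvalTerm M g (.var x) a
  | const {c a} : M.const c = some a → EvalTerm M g (.const c) a
  | func {f ts as a} : List.Forall₂ (EvalTerm M g) ts as →
      M.func f as = some a → EvalTerm M g (.func f ts) a

/-- The compositional semantics: `Sat M true g φ` is `M,g ⊨⁺ φ` and
`Sat M false g φ` is `M,g ⊨⁻ φ`, defined by simultaneous recursion. -/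
def Sat (M : PModel A) : Bool → Assign A → PFormula → Prop
  | s, g, .rel R ts => ∃ as, List.Forall₂ (EvalTerm M g) ts as ∧ M.rel R as = some s
  | s, g, .eq t₁ t₂ => ∃ a₁ a₂, EvalTerm M g t₁ a₁ ∧ EvalTerm M g t₂ a₂ ∧
      (if s then a₁ = a₂ else a₁ ≠ a₂)
  | s, g, .not φ => Sat M (!s) g φ
  | true, g, .and φ ψ => Sat M true g φ ∧ Sat M true g ψ
  | false, g, .and φ ψ => Sat M false g φ ∨ Sat M false g ψ
  | true, g, .ex x φ => ∃ a : A, Sat M true (g.update x a) φ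
  | false, g, .ex x φ => ∀ a : A, Sat M false (g.update x a) φ

/-- `GWin M who v g φ` : in the semantic game on the fixed partial model `M`, the
player `who` (`true` = Eloise, `false` = Abelard) has a winning strategy from the
position `(g, φ)`, where Eloise is the current verifier iff `v = true`. The game is
the standard GTS of first-order logic (the verifier chooses at `∃`, the falsifier at
`∧`, negation swaps the roles), with the atomic endgame rules for partial models:
the current verifier wins at a true defined atom, the current falsifier wins at a
false defined atom, and if some term value or the relation is undefined the play
ends with no winner (no constructor applies). -/
inductive GWin (M : PModel A) : Bool → Bool → Assign A → PFormula → Prop where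
  | relTrue {v g R ts as} :
      List.Forall₂ (EvalTerm M g) ts as → M.rel R as = some true →
      GWin M v v g (.rel R ts)
  | relFalse {v g R ts as} :
      List.Forall₂ (EvalTerm M g) ts as → M.rel R as = some false →
      GWin M (!v) v g (.rel R ts)
  | eqTrue {v g t₁ t₂ a₁ a₂} :
      EvalTerm M g t₁ a₁ → EvalTerm M g t₂ a₂ → a₁ = a₂ →
      GWin M v v g (.eq t₁ t₂)
  | eqFalse {v g t₁ t₂ a₁ a₂} :
      EvalTerm M g t₁ a₁ → EvalTerm M g t₂ a₂ → a₁ ≠ a₂ →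
      GWin M (!v) v g (.eq t₁ t₂)
  | not {who v g φ} : GWin M who (!v) g φ → GWin M who v g (.not φ)
  | andVer {who v g φ ψ} : who = v →
      GWin M who v g φ → GWin M who v g ψ → GWin M who v g (.and φ ψ)
  | andFalL {who v g φ ψ} : who = !v →
      GWin M who v g φ → GWin M who v g (.and φ ψ)
  | andFalR {who v g φ ψ} : who = !v →
      GWin M who v g ψ → GWin M who v g (.and φ ψ)
  | exVer {who v g x φ a} : who = v →
      GWin M who v (Assign.update g x a) φ → GWin M who v g (.ex x φ)
  | exFal {who v g x φ} : who = !v →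
      (∀ a : A, GWin M who v (Assign.update g x a) φ) → GWin M who v g (.ex x φ)

end PartialFO

namespace PartialFO

variable {A : Type} {M : PModel A} {w v : Bool} {g : Assign A}

theorem gwin_rel_iff_sat {R : ℕ} {ts : List PTerm} :
    GWin M w v g (.rel R ts) ↔ Sat M (w == v) g (.rel R ts) := by
  constructor
  · intro h
    cases h with
    | relTrue hts hR | relFalse hts hR => exact ⟨_, hts, by simpa using hR⟩
  · rintro ⟨as, hts, hR⟩
    cases w <;> cases v
    exacts [.relTrue hts hR, .relFalse (v := true) hts hR, .relFalse (v := false) hts hR,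
      .relTrue hts hR]

theorem gwin_eq_iff_sat {t₁ t₂ : PTerm} :
    GWin M w v g (.eq t₁ t₂) ↔ Sat M (w == v) g (.eq t₁ t₂) := by
  constructor
  · intro h
    cases h with
    | eqTrue h₁ h₂ h | eqFalse h₁ h₂ h => exact ⟨_, _, h₁, h₂, by simpa using h⟩
  · rintro ⟨a₁, a₂, h₁, h₂, h⟩
    cases w <;> cases v
    exacts [.eqTrue h₁ h₂ h, .eqFalse (v := true) h₁ h₂ h, .eqFalse (v := false) h₁ h₂ h,
      .eqTrue h₁ h₂ h]

theorem gwin_not_iff {φ : PFormula} : GWin M w v g (.not φ) ↔ GWin M w (!v) g φ :=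
  ⟨fun | .not h => h, .not⟩

theorem gwin_and_iff {φ ψ : PFormula} :
    GWin M w v g (.and φ ψ) ↔
      (w = v ∧ GWin M w v g φ ∧ GWin M w v g ψ) ∨
      (w = !v ∧ (GWin M w v g φ ∨ GWin M w v g ψ)) := by
  constructor
  · intro h
    cases h with
    | andVer hw hφ hψ => exact .inl ⟨hw, hφ, hψ⟩
    | andFalL hw hφ => exact .inr ⟨hw, .inl hφ⟩
    | andFalR hw hψ => exact .inr ⟨hw, .inr hψ⟩
  · rintro (⟨hw, hφ, hψ⟩ | ⟨hw, hφ | hψ⟩)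
    exacts [.andVer hw hφ hψ, .andFalL hw hφ, .andFalR hw hψ]

theorem gwin_ex_iff {x : ℕ} {φ : PFormula} :
    GWin M w v g (.ex x φ) ↔
      (w = v ∧ ∃ a, GWin M w v (g.update x a) φ) ∨
      (w = !v ∧ ∀ a, GWin M w v (g.update x a) φ) := by
  constructor
  · intro h
    cases h with
    | exVer hw hφ => exact .inl ⟨hw, _, hφ⟩
    | exFal hw hφ => exact .inr ⟨hw, hφ⟩
  · rintro (⟨hw, a, hφ⟩ | ⟨hw, hφ⟩)
    exacts [.exVer hw hφ, .exFal hw hφ]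

theorem gwin_iff_sat (φ : PFormula) : GWin M w v g φ ↔ Sat M (w == v) g φ := by
  induction φ generalizing g w v with
  | rel R ts => exact gwin_rel_iff_sat
  | eq t₁ t₂ => exact gwin_eq_iff_sat
  | not φ ih =>
    rw [gwin_not_iff, ih]
    cases w <;> cases v <;> rfl
  | and φ ψ ihφ ihψ =>
    rw [gwin_and_iff, ihφ, ihψ]
    cases w <;> cases v <;> simp [Sat]
  | ex x φ ih =>
    simp only [gwin_ex_iff, ih]
    cases w <;> cases v <;> simp [Sat]

end PartialFO

open PartialFO

/-- The game-theoretic semantics extends the compositional one on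
the first-order fragment: for every first-order formula `φ` over a vocabulary with
partially interpreted relation, function and constant symbols, every partial model
`M` and every assignment `g`, the verifier Eloise has a winning strategy in the game
`G(M, g, φ)` iff `M,g ⊨⁺ φ` compositionally, and the falsifier Abelard has a winning
strategy in `G(M, g, φ)` iff `M,g ⊨⁻ φ` compositionally. -/
theorem gts_extends_compositional {A : Type} (M : PModel A) (g : Assign A)
    (φ : PFormula) :
    (GWin M true true g φ ↔ Sat M true g φ) ∧
    (GWin M false true g φ ↔ Sat M false g φ) :=
  ⟨gwin_iff_sat φ, gwin_iff_sat φ⟩
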